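/- For α < 0, N ≥ 2, any X ∈ S with pairwise distinct columns, and any step size γ > 0, the gradient projection iterate [X - γ ∇E_α(X)]⁺ lies in S (i.e., all its columns are unit vectors). -/

import Mathlib

open scoped RealInnerProductSpace
open Finset

/-- The `j`-th column of a matrix, as a vector in Euclidean space. -/
noncomputable def col {n N : ℕ} (X : Matrix (Fin n) (Fin N) ℝ) (j : Fin N) :
    EuclideanSpace ℝ (Fin n) := WithLp.toLp 2 (fun i => X i j)

/-- The set `S` of matrices all of whose columns are unit vectors. -/
def sphereSet (n N : ℕ) : Set (Matrix (Fin n) (Fin N) ℝ) :=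
  {X | ∀ j, ‖col X j‖ = 1}

/-- The Frobenius norm `‖X‖_F = √(Tr (X Xᵀ))`. -/
noncomputable def frob {n N : ℕ} (X : Matrix (Fin n) (Fin N) ℝ) : ℝ :=
  Real.sqrt (Matrix.trace (X * Matrix.transpose X))

/-- The generalized energy `E_α(X) = Σ_i Σ_{j<i} ‖X_{:,i} - X_{:,j}‖₂^α`. -/
noncomputable def energy {n N : ℕ} (α : ℝ) (X : Matrix (Fin n) (Fin N) ℝ) : ℝ :=
  ∑ i : Fin N, ∑ j ∈ Finset.univ.filter (fun j => j < i), ‖col X i - col X j‖ ^ α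

/-- The gradient of `E_α` with respect to the `k`-th column. -/
noncomputable def gradCol {n N : ℕ} (α : ℝ) (X : Matrix (Fin n) (Fin N) ℝ) (k : Fin N) :
    EuclideanSpace ℝ (Fin n) :=
  ∑ j ∈ Finset.univ.filter (fun j => j ≠ k),
    (α * ‖col X k - col X j‖ ^ (α - 1)) • (col X k - col X j)

/-- The gradient matrix `∇E_α(X)`, whose `k`-th column is `gradCol α X k`. -/
noncomputable def gradMat {n N : ℕ} (α : ℝ) (X : Matrix (Fin n) (Fin N) ℝ) :
    Matrix (Fin n) (Fin N) ℝ := fun i k => gradCol α X k i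

/-- The columnwise projection onto `conv(S)`. -/
noncomputable def projS {n N : ℕ} (X : Matrix (Fin n) (Fin N) ℝ) :
    Matrix (Fin n) (Fin N) ℝ :=
  fun i j => if 1 < ‖col X j‖ then X i j / ‖col X j‖ else X i j

/-- Pairwise distinct columns. -/
def distinctCols {n N : ℕ} (X : Matrix (Fin n) (Fin N) ℝ) : Prop :=
  ∀ i j : Fin N, i ≠ j → col X i ≠ col X j

/-!
For vectors of equal norm, `⟪x, x - y⟫ = ‖x - y‖² / 2`. Hence every term
`α ‖x_k - x_j‖^(α-1) (x_k - x_j)` of the `k`-th gradient column has negative inner product with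
`x_k` when `α < 0`, so the gradient step `x_k - γ ∇_k E_α` has inner product `> 1` with the unit
vector `x_k`, hence norm `> 1` by Cauchy–Schwarz, and the projection rescales it to a unit vector.
-/

section InnerProductSpace

variable {E : Type*} [NormedAddCommGroup E] [InnerProductSpace ℝ E]

theorem real_inner_self_sub_eq_half_norm_sub_sq {x y : E} (h : ‖x‖ = ‖y‖) :
    ⟪x, x - y⟫ = ‖x - y‖ ^ 2 / 2 := by
  rw [inner_sub_right, real_inner_self_eq_norm_sq, norm_sub_sq_real, h]
  ring

theorem real_inner_self_sub_pos {x y : E} (h : ‖x‖ = ‖y‖) (hxy : x ≠ y) : 0 < ⟪x, x - y⟫ := by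
  rw [real_inner_self_sub_eq_half_norm_sub_sq h]
  have : 0 < ‖x - y‖ := norm_pos_iff.mpr (sub_ne_zero.mpr hxy)
  positivity

theorem one_lt_norm_sub_smul {x g : E} (hx : ‖x‖ = 1) (hg : ⟪x, g⟫ < 0) {γ : ℝ} (hγ : 0 < γ) :
    1 < ‖x - γ • g‖ := by
  have hinner : 1 < ⟪x, x - γ • g⟫ := by
    rw [inner_sub_right, real_inner_smul_right, real_inner_self_eq_norm_sq, hx]
    nlinarith
  calc 1 < ⟪x, x - γ • g⟫ := hinner
    _ ≤ ‖x‖ * ‖x - γ • g‖ := real_inner_le_norm _ _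
    _ = ‖x - γ • g‖ := by rw [hx, one_mul]

end InnerProductSpace

section Columns

variable {n N : ℕ}

theorem col_sub_smul (X G : Matrix (Fin n) (Fin N) ℝ) (γ : ℝ) (k : Fin N) :
    col (X - γ • G) k = col X k - γ • col G k := rfl

theorem col_gradMat (α : ℝ) (X : Matrix (Fin n) (Fin N) ℝ) (k : Fin N) :
    col (gradMat α X) k = gradCol α X k := rfl

theorem col_projS_of_one_lt {Y : Matrix (Fin n) (Fin N) ℝ} {k : Fin N} (hY : 1 < ‖col Y k‖) :
    col (projS Y) k = ‖col Y k‖⁻¹ • col Y k := by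
  ext i
  change (if 1 < ‖col Y k‖ then Y i k / ‖col Y k‖ else Y i k) = ‖col Y k‖⁻¹ * Y i k
  rw [if_pos hY, div_eq_inv_mul]

theorem norm_col_projS_of_one_lt {Y : Matrix (Fin n) (Fin N) ℝ} {k : Fin N}
    (hY : 1 < ‖col Y k‖) : ‖col (projS Y) k‖ = 1 := by
  rw [col_projS_of_one_lt hY, norm_smul, norm_inv, norm_norm,
    inv_mul_cancel₀ (by positivity)]

theorem inner_col_gradCol_neg [Nontrivial (Fin N)] {α : ℝ} (hα : α < 0)
    {X : Matrix (Fin n) (Fin N) ℝ} (hX : X ∈ sphereSet n N) (hd : distinctCols X) (k : Fin N) :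
    ⟪col X k, gradCol α X k⟫ < 0 := by
  rw [gradCol, inner_sum]
  refine Finset.sum_neg (fun j hj => ?_) ?_
  · have hjk : k ≠ j := Ne.symm (Finset.mem_filter.mp hj).2
    have hdist : 0 < ‖col X k - col X j‖ := norm_pos_iff.mpr (sub_ne_zero.mpr (hd k j hjk))
    rw [real_inner_smul_right]
    exact mul_neg_of_neg_of_pos (mul_neg_of_neg_of_pos hα (Real.rpow_pos_of_pos hdist _))
      (real_inner_self_sub_pos ((hX k).trans (hX j).symm) (hd k j hjk))
  · obtain ⟨j, hj⟩ := exists_ne k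
    exact ⟨j, Finset.mem_filter.mpr ⟨Finset.mem_univ j, hj⟩⟩

end Columns

theorem projS_grad_step_mem_sphereSet {n N : ℕ} (hN : 2 ≤ N) (α : ℝ) (hα : α < 0)
    (X : Matrix (Fin n) (Fin N) ℝ) (hX : X ∈ sphereSet n N) (hd : distinctCols X)
    (γ : ℝ) (hγ : 0 < γ) :
    projS (X - γ • gradMat α X) ∈ sphereSet n N := by
  have : Nontrivial (Fin N) := Fin.nontrivial_iff_two_le.mpr hN
  intro k
  apply norm_col_projS_of_one_lt
  rw [col_sub_smul, col_gradMat]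
  exact one_lt_norm_sub_smul (hX k) (inner_col_gradCol_neg hα hX hd k) hγ
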